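/- Let d ≥ 2 be an integer, n : ℕ, and p ∈ [0,1]. Let e be the equivalence (Fin n → Fin d × Fin d) ≃ (Fin n → Fin d) × (Fin n → Fin d) given by f ↦ (fun m => (f m).1, fun m => (f m).2). If E is a matrix indexed by (Fin n → Fin d × Fin d) such that both E and 1 − E, reindexed along e, are separable with respect to the Alice/Bob bipartition, then Re(p · Tr(E · σ_d^{⊗n}) + (1−p) · Tr((1 − E) · α_d^{⊗n})) ≥ min(p · ((d−1)/(d+1))^n, 1−p). -/

import Mathlib

open Matrix Finset
open scoped BigOperators Kronecker ComplexOrder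

noncomputable section

/-- The flip (swap) operator on `ℂ^d ⊗ ℂ^d`. -/
def Flip (d : ℕ) : Matrix (Fin d × Fin d) (Fin d × Fin d) ℂ :=
  Matrix.of fun p q => if p.1 = q.2 ∧ p.2 = q.1 then 1 else 0

/-- Projection onto the symmetric subspace, `Π_s = (1 + F)/2`. -/
def projSym (d : ℕ) : Matrix (Fin d × Fin d) (Fin d × Fin d) ℂ :=
  (2 : ℂ)⁻¹ • (1 + Flip d)

/-- Projection onto the antisymmetric subspace, `Π_a = (1 - F)/2`. -/
def projAsym (d : ℕ) : Matrix (Fin d × Fin d) (Fin d × Fin d) ℂ :=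
  (2 : ℂ)⁻¹ • (1 - Flip d)

/-- The symmetric Werner state `σ_d = (2/(d(d+1))) • Π_s`. -/
def wernerSym (d : ℕ) : Matrix (Fin d × Fin d) (Fin d × Fin d) ℂ :=
  (2 / ((d : ℂ) * ((d : ℂ) + 1))) • projSym d

/-- The antisymmetric Werner state `α_d = (2/(d(d-1))) • Π_a`. -/
def wernerAsym (d : ℕ) : Matrix (Fin d × Fin d) (Fin d × Fin d) ℂ :=
  (2 / ((d : ℂ) * ((d : ℂ) - 1))) • projAsym d

/-- The POVM element `G_d`: diagonal, with `(i,j),(i,j)` entry `1` iff `i ≠ j`. -/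
def Gmat (d : ℕ) : Matrix (Fin d × Fin d) (Fin d × Fin d) ℂ :=
  Matrix.diagonal fun p => if p.1 ≠ p.2 then 1 else 0

/-- `n`-fold tensor power of a matrix on `ℂ^d ⊗ ℂ^d`. -/
def tpow {d : ℕ} (n : ℕ) (X : Matrix (Fin d × Fin d) (Fin d × Fin d) ℂ) :
    Matrix (Fin n → Fin d × Fin d) (Fin n → Fin d × Fin d) ℂ :=
  Matrix.of fun f g => ∏ m, X (f m) (g m)

/-- The twirled single-copy POVM element `M_d = ((d-1)/(d+1)) • Π_s + Π_a`. -/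
def MdMat (d : ℕ) : Matrix (Fin d × Fin d) (Fin d × Fin d) ℂ :=
  (((d : ℂ) - 1) / ((d : ℂ) + 1)) • projSym d + projAsym d

/-- `A_k`: sum over all `k`-element subsets `S` of the copies of the tensor product with
`Π_a` on copies in `S` and `Π_s` elsewhere. -/
def Amat (d n k : ℕ) : Matrix (Fin n → Fin d × Fin d) (Fin n → Fin d × Fin d) ℂ :=
  ∑ S ∈ Finset.powersetCard k (Finset.univ : Finset (Fin n)),
    Matrix.of fun f g => ∏ m, (if m ∈ S then projAsym d else projSym d) (f m) (g m)

/-- Partial transpose on `ℂ^d ⊗ ℂ^d`. -/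
def pt {d : ℕ} (X : Matrix (Fin d × Fin d) (Fin d × Fin d) ℂ) :
    Matrix (Fin d × Fin d) (Fin d × Fin d) ℂ :=
  Matrix.of fun p q => X (p.1, q.2) (q.1, p.2)

/-- The maximally entangled state `Φ_d`. -/
def Phi (d : ℕ) : Matrix (Fin d × Fin d) (Fin d × Fin d) ℂ :=
  Matrix.of fun p q => if p.1 = p.2 ∧ q.1 = q.2 then ((d : ℂ))⁻¹ else 0

/-- `n`-copy partial transpose. -/
def ptN {d n : ℕ} (Y : Matrix (Fin n → Fin d × Fin d) (Fin n → Fin d × Fin d) ℂ) :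
    Matrix (Fin n → Fin d × Fin d) (Fin n → Fin d × Fin d) ℂ :=
  Matrix.of fun f g => Y (fun m => ((f m).1, (g m).2)) (fun m => ((g m).1, (f m).2))

/-- `T_l`: sum over all `l`-element subsets `S` of the copies of the tensor product with
`Φ_d` on copies in `S` and `1 - Φ_d` elsewhere. -/
def Tmat (d n l : ℕ) : Matrix (Fin n → Fin d × Fin d) (Fin n → Fin d × Fin d) ℂ :=
  ∑ S ∈ Finset.powersetCard l (Finset.univ : Finset (Fin n)),
    Matrix.of fun f g => ∏ m, (if m ∈ S then Phi d else (1 - Phi d)) (f m) (g m)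

/-- The matrix `Q` of the linear program: `Q l k = Σ_{j=0}^{min(l,k)}
(n−l choose k−j)(l choose j)(1−d)^j (1+d)^{l−j}`. -/
def Qmat (n : ℕ) (d : ℝ) (l k : ℕ) : ℝ :=
  ∑ j ∈ Finset.range (min l k + 1),
    ((n - l).choose (k - j) : ℝ) * (l.choose j : ℝ) * (1 - d) ^ j * (1 + d) ^ (l - j)

/-- A PPT POVM element on the `n`-copy space: `E`, `1 - E`, `E^Γ`, `(1-E)^Γ` all PSD. -/
def IsPPTPovmElem {d n : ℕ}
    (E : Matrix (Fin n → Fin d × Fin d) (Fin n → Fin d × Fin d) ℂ) : Prop :=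
  E.PosSemidef ∧ (1 - E).PosSemidef ∧ (ptN E).PosSemidef ∧ (ptN (1 - E)).PosSemidef

/-- Error probability for discriminating `σ_d^{⊗n}` (prior `p`) from `α_d^{⊗n}`
(prior `1-p`) with the two-outcome POVM `{E, 1 - E}`. -/
def errProb (d n : ℕ) (p : ℝ)
    (E : Matrix (Fin n → Fin d × Fin d) (Fin n → Fin d × Fin d) ℂ) : ℝ :=
  ((p : ℂ) * (E * tpow n (wernerSym d)).trace
    + (1 - (p : ℂ)) * ((1 - E) * tpow n (wernerAsym d)).trace).re

/-- Separability of a bipartite matrix. -/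
def IsSep {I J : Type*} [Fintype I] [Fintype J]
    (W : Matrix (I × J) (I × J) ℂ) : Prop :=
  ∃ (m : ℕ) (A : Fin m → Matrix I I ℂ) (B : Fin m → Matrix J J ℂ),
    (∀ i, (A i).PosSemidef) ∧ (∀ i, (B i).PosSemidef) ∧ W = ∑ i, A i ⊗ₖ B i

/-- Trace norm `‖X‖₁ = Tr √(Xᴴ X)`. -/
def traceNorm {ι : Type*} [Fintype ι] [DecidableEq ι] (X : Matrix ι ι ℂ) : ℝ :=
  (((Matrix.posSemidef_conjTranspose_mul_self X).1.eigenvectorUnitary : Matrix ι ι ℂ) *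
    Matrix.diagonal (fun i => ((Real.sqrt
      ((Matrix.posSemidef_conjTranspose_mul_self X).1.eigenvalues i) : ℝ) : ℂ)) *
    (star (Matrix.posSemidef_conjTranspose_mul_self X).1.eigenvectorUnitary :
      Matrix ι ι ℂ)).trace.re

/-- Frobenius (Hilbert–Schmidt) norm `‖X‖₂ = √(Tr (Xᴴ X))`. -/
def frobNorm {ι : Type*} [Fintype ι] (X : Matrix ι ι ℂ) : ℝ :=
  Real.sqrt ((Xᴴ * X).trace.re)

/-
Separability of `E` and `1 - E` makes `E`, its partial transpose `E^Γ` and `1 - E` positive.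
With `r = (d-1)/(d+1)` one has `r α_d = (2/(d(d+1))) Π_a`, and since the partial transpose of the
flip is the rank-one projector onto `∑ᵢ |ii⟩`, the partial transpose of
`σ_d^{⊗n} - r^n α_d^{⊗n}` is `(A + B)^{⊗n} - (A - B)^{⊗n}` for positive `A ∝ 1`, `B ∝ |Φ⟩⟨Φ|`,
hence positive. Pairing with `E^Γ` gives `Tr(E σ_d^{⊗n}) ≥ r^n x` with `x = Tr(E α_d^{⊗n})`,
and `x ∈ [0, 1]` because `α_d^{⊗n}` is a state and `E, 1 - E ≥ 0`. The error probability is thus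
at least `x · p r^n + (1 - x)(1 - p) ≥ min (p r^n) (1 - p)`.
-/
theorem min_le_mul_add_one_sub_mul {a b x : ℝ} (hx0 : 0 ≤ x) (hx1 : x ≤ 1) :
    min a b ≤ x * a + (1 - x) * b := by
  nlinarith [mul_le_mul_of_nonneg_left (min_le_left a b) hx0,
    mul_le_mul_of_nonneg_left (min_le_right a b) (sub_nonneg.2 hx1)]

namespace Matrix

open scoped MatrixOrder

variable {𝕜 κ : Type*} [RCLike 𝕜]

theorem PosSemidef.trace_mul_nonneg [Fintype κ] [DecidableEq κ] {A B : Matrix κ κ 𝕜}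
    (hA : A.PosSemidef) (hB : B.PosSemidef) : 0 ≤ (A * B).trace := by
  obtain ⟨C, rfl⟩ := CStarAlgebra.nonneg_iff_eq_star_mul_self.mp hB.nonneg
  rw [star_eq_conjTranspose, ← Matrix.mul_assoc, trace_mul_comm, ← Matrix.mul_assoc]
  exact (hA.mul_mul_conjTranspose_same C).trace_nonneg

def kroneckerPow {R : Type*} [CommMonoid R] (n : ℕ) (X : Matrix κ κ R) :
    Matrix (Fin n → κ) (Fin n → κ) R :=
  of fun f g => ∏ m, X (f m) (g m)

theorem kroneckerPow_zero [DecidableEq κ] (X : Matrix κ κ 𝕜) : kroneckerPow 0 X = 1 := by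
  ext f g
  simp [kroneckerPow, one_apply, Subsingleton.elim f g]

theorem kroneckerPow_succ (n : ℕ) (X : Matrix κ κ 𝕜) :
    kroneckerPow (n + 1) X = (X ⊗ₖ kroneckerPow n X).submatrix
      (Fin.consEquiv fun _ => κ).symm (Fin.consEquiv fun _ => κ).symm := by
  ext f g
  simp [kroneckerPow, Fin.prod_univ_succ, Fin.tail]

theorem kroneckerPow_smul (n : ℕ) (c : 𝕜) (X : Matrix κ κ 𝕜) :
    kroneckerPow n (c • X) = c ^ n • kroneckerPow n X := by
  ext f g
  simp [kroneckerPow, Finset.prod_mul_distrib]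

theorem trace_kroneckerPow [Fintype κ] (n : ℕ) (X : Matrix κ κ 𝕜) :
    (kroneckerPow n X).trace = X.trace ^ n :=
  (Fintype.sum_pow (fun i => X i i) n).symm

theorem PosSemidef.kroneckerPow [Fintype κ] [DecidableEq κ] {X : Matrix κ κ 𝕜}
    (hX : X.PosSemidef) (n : ℕ) : (kroneckerPow n X).PosSemidef := by
  induction n with
  | zero => simpa [kroneckerPow_zero] using PosSemidef.one
  | succ n ih => simpa [kroneckerPow_succ] using hX.kronecker ih

-- Expanded, `(A + B)^{⊗n} ± (A - B)^{⊗n}` is twice the sum of the Kronecker products of `A`'s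
-- and `B`'s with an even (resp. odd) number of `B`'s.
theorem PosSemidef.kroneckerPow_add_add_and_sub [Fintype κ] [DecidableEq κ] {A B : Matrix κ κ 𝕜}
    (hA : A.PosSemidef) (hB : B.PosSemidef) (n : ℕ) :
    (Matrix.kroneckerPow n (A + B) + Matrix.kroneckerPow n (A - B)).PosSemidef ∧
      (Matrix.kroneckerPow n (A + B) - Matrix.kroneckerPow n (A - B)).PosSemidef := by
  induction n with
  | zero =>
    rw [kroneckerPow_zero, kroneckerPow_zero, sub_self]
    exact ⟨PosSemidef.one.add PosSemidef.one, PosSemidef.zero⟩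
  | succ n ih =>
    set P := Matrix.kroneckerPow n (A + B)
    set M := Matrix.kroneckerPow n (A - B)
    set e := (Fin.consEquiv fun _ : Fin (n + 1) => κ).symm
    have hadd : Matrix.kroneckerPow (n + 1) (A + B) + Matrix.kroneckerPow (n + 1) (A - B) =
        (A ⊗ₖ (P + M) + B ⊗ₖ (P - M)).submatrix e e := by
      ext f g
      simp only [kroneckerPow_succ, add_apply, sub_apply, submatrix_apply, kroneckerMap_apply]
      ring
    have hsub : Matrix.kroneckerPow (n + 1) (A + B) - Matrix.kroneckerPow (n + 1) (A - B) =
        (A ⊗ₖ (P - M) + B ⊗ₖ (P + M)).submatrix e e := by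
      ext f g
      simp only [kroneckerPow_succ, add_apply, sub_apply, submatrix_apply, kroneckerMap_apply]
      ring
    rw [hadd, hsub, posSemidef_submatrix_equiv, posSemidef_submatrix_equiv]
    exact ⟨(hA.kronecker ih.1).add (hB.kronecker ih.2),
      (hA.kronecker ih.2).add (hB.kronecker ih.1)⟩

end Matrix

def partialTranspose {I J R : Type*} (W : Matrix (I × J) (I × J) R) :
    Matrix (I × J) (I × J) R :=
  of fun p q => W (p.1, q.2) (q.1, p.2)

section Separable

variable {I J : Type*} [Fintype I] [Fintype J] {W : Matrix (I × J) (I × J) ℂ}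

theorem IsSep.posSemidef (hW : IsSep W) : W.PosSemidef := by
  obtain ⟨m, A, B, hA, hB, rfl⟩ := hW
  exact posSemidef_sum _ fun i _ => (hA i).kronecker (hB i)

theorem IsSep.posSemidef_partialTranspose (hW : IsSep W) : (partialTranspose W).PosSemidef := by
  obtain ⟨m, A, B, hA, hB, rfl⟩ := hW
  have : partialTranspose (∑ i, A i ⊗ₖ B i) = ∑ i, A i ⊗ₖ (B i)ᵀ := by
    ext p q
    simp [partialTranspose, Matrix.sum_apply]
  rw [this]
  exact posSemidef_sum _ fun i _ => (hA i).kronecker (hB i).transpose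

end Separable

section Werner

variable {d n : ℕ}

theorem tpow_eq_kroneckerPow (X : Matrix (Fin d × Fin d) (Fin d × Fin d) ℂ) :
    tpow n X = kroneckerPow n X := rfl

theorem posSemidef_of_isSep_reindex
    {E : Matrix (Fin n → Fin d × Fin d) (Fin n → Fin d × Fin d) ℂ}
    (hE : IsSep (reindex (Equiv.arrowProdEquivProdArrow (Fin n) (fun _ => Fin d) (fun _ => Fin d))
      (Equiv.arrowProdEquivProdArrow (Fin n) (fun _ => Fin d) (fun _ => Fin d)) E)) :
    E.PosSemidef :=
  (posSemidef_submatrix_equiv _).1 hE.posSemidef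

theorem posSemidef_ptN_of_isSep_reindex
    {E : Matrix (Fin n → Fin d × Fin d) (Fin n → Fin d × Fin d) ℂ}
    (hE : IsSep (reindex (Equiv.arrowProdEquivProdArrow (Fin n) (fun _ => Fin d) (fun _ => Fin d))
      (Equiv.arrowProdEquivProdArrow (Fin n) (fun _ => Fin d) (fun _ => Fin d)) E)) :
    (ptN E).PosSemidef :=
  hE.posSemidef_partialTranspose.submatrix (Equiv.arrowProdEquivProdArrow (Fin n) _ _)

theorem trace_ptN_mul_ptN (A B : Matrix (Fin n → Fin d × Fin d) (Fin n → Fin d × Fin d) ℂ) :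
    (ptN A * ptN B).trace = (A * B).trace := by
  let swap : (Fin n → Fin d × Fin d) × (Fin n → Fin d × Fin d) →
      (Fin n → Fin d × Fin d) × (Fin n → Fin d × Fin d) :=
    fun x => (fun m => ((x.1 m).1, (x.2 m).2), fun m => ((x.2 m).1, (x.1 m).2))
  have hswap : Function.Involutive swap := fun _ => rfl
  simp only [trace, diag_apply, mul_apply, ← Fintype.sum_prod_type']
  exact Fintype.sum_equiv hswap.toPerm _ _ fun _ => rfl

theorem flip_conjTranspose : (Flip d)ᴴ = Flip d := by
  ext p q
  simp only [conjTranspose_apply, Flip, of_apply]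
  split_ifs <;> simp_all

theorem flip_mul_flip : Flip d * Flip d = 1 := by
  ext p q
  simp only [Flip, mul_apply, of_apply, one_apply, mul_ite, mul_one, mul_zero]
  rw [Finset.sum_eq_single (p.2, p.1) (by grind) (by simp)]
  grind

theorem isStarProjection_projAsym : IsStarProjection (projAsym d) where
  isIdempotentElem := by
    have h : (1 - Flip d) * (1 - Flip d) = (2 : ℂ) • (1 - Flip d) := by
      rw [two_smul, sub_mul, one_mul, mul_sub, mul_one, flip_mul_flip]; abel
    rw [IsIdempotentElem, projAsym, smul_mul_smul_comm, h, smul_smul]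
    norm_num
  isSelfAdjoint := by
    rw [IsSelfAdjoint, projAsym, star_smul, star_sub, star_one, star_eq_conjTranspose,
      flip_conjTranspose]
    norm_num

open scoped MatrixOrder in
theorem posSemidef_projAsym : (projAsym d).PosSemidef :=
  isStarProjection_projAsym.nonneg.posSemidef

def maxEntVec (d : ℕ) : Fin d × Fin d → ℂ := fun p => if p.1 = p.2 then 1 else 0

theorem pt_projSym :
    pt (projSym d) = (2 : ℂ)⁻¹ • 1 + (2 : ℂ)⁻¹ • vecMulVec (maxEntVec d) (star (maxEntVec d)) := by
  ext ⟨a, b⟩ ⟨c, e⟩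
  simp only [pt, projSym, Flip, maxEntVec, of_apply, Matrix.smul_apply, Matrix.add_apply,
    one_apply, vecMulVec_apply, Pi.star_apply, Prod.mk.injEq, smul_eq_mul]
  split_ifs <;> simp only [star_one, star_zero] <;> grind

theorem pt_projAsym :
    pt (projAsym d) = (2 : ℂ)⁻¹ • 1 - (2 : ℂ)⁻¹ • vecMulVec (maxEntVec d) (star (maxEntVec d)) := by
  ext ⟨a, b⟩ ⟨c, e⟩
  simp only [pt, projAsym, Flip, maxEntVec, of_apply, Matrix.smul_apply, Matrix.sub_apply,
    one_apply, vecMulVec_apply, Pi.star_apply, Prod.mk.injEq, smul_eq_mul]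
  split_ifs <;> simp only [star_one, star_zero] <;> grind

theorem pt_smul (c : ℂ) (X : Matrix (Fin d × Fin d) (Fin d × Fin d) ℂ) :
    pt (c • X) = c • pt X := rfl

theorem ptN_tpow_sub_tpow (X Y : Matrix (Fin d × Fin d) (Fin d × Fin d) ℂ) :
    ptN (tpow n X - tpow n Y) = tpow n (pt X) - tpow n (pt Y) := rfl

theorem tpow_smul (c : ℂ) (X : Matrix (Fin d × Fin d) (Fin d × Fin d) ℂ) :
    tpow n (c • X) = c ^ n • tpow n X :=
  kroneckerPow_smul n c X

theorem trace_flip : (Flip d).trace = d := by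
  rw [trace, Fintype.sum_prod_type]
  simp [Flip, eq_comm]

theorem trace_wernerAsym (hd : 2 ≤ d) : (wernerAsym d).trace = 1 := by
  have : (d : ℂ) - 1 ≠ 0 := by
    rw [sub_ne_zero]; exact_mod_cast (by omega : d ≠ 1)
  have : (d : ℂ) ≠ 0 := by exact_mod_cast (by omega : d ≠ 0)
  simp only [wernerAsym, projAsym, trace_smul, trace_sub, trace_one, Fintype.card_prod,
    Fintype.card_fin, Nat.cast_mul, trace_flip, smul_eq_mul]
  field_simp

theorem trace_tpow_wernerAsym (hd : 2 ≤ d) (n : ℕ) : (tpow n (wernerAsym d)).trace = 1 := by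
  rw [tpow_eq_kroneckerPow, trace_kroneckerPow, trace_wernerAsym hd, one_pow]

theorem posSemidef_wernerAsym (d : ℕ) : (wernerAsym d).PosSemidef := by
  refine posSemidef_projAsym.smul ?_
  have : (0 : ℝ) ≤ (d : ℝ) * ((d : ℝ) - 1) := by
    rcases d with _ | d <;> push_cast <;> nlinarith
  simpa using Complex.zero_le_real.2 (div_nonneg zero_le_two this)

theorem pt_wernerSym : pt (wernerSym d) =
    ((d : ℂ) * ((d : ℂ) + 1))⁻¹ • 1 +
      ((d : ℂ) * ((d : ℂ) + 1))⁻¹ • vecMulVec (maxEntVec d) (star (maxEntVec d)) := by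
  rw [wernerSym, pt_smul, pt_projSym, smul_add, smul_smul, smul_smul]
  congr 2 <;> ring

theorem pt_smul_wernerAsym (hd : 2 ≤ d) :
    pt (((((d : ℝ) - 1) / ((d : ℝ) + 1) : ℝ) : ℂ) • wernerAsym d) =
      ((d : ℂ) * ((d : ℂ) + 1))⁻¹ • 1 -
        ((d : ℂ) * ((d : ℂ) + 1))⁻¹ • vecMulVec (maxEntVec d) (star (maxEntVec d)) := by
  have : (d : ℂ) - 1 ≠ 0 := by
    rw [sub_ne_zero]; exact_mod_cast (by omega : d ≠ 1)
  rw [wernerAsym, smul_smul, pt_smul, pt_projAsym, smul_sub, smul_smul, smul_smul]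
  congr 2 <;> push_cast <;> field_simp

theorem posSemidef_ptN_tpow_wernerSym_sub (hd : 2 ≤ d) (n : ℕ) :
    (ptN (tpow n (wernerSym d) -
      ((((d : ℝ) - 1) / ((d : ℝ) + 1) : ℝ) : ℂ) ^ n • tpow n (wernerAsym d))).PosSemidef := by
  have hc : (0 : ℂ) ≤ ((d : ℂ) * ((d : ℂ) + 1))⁻¹ := by
    have h : (0 : ℝ) ≤ ((d : ℝ) * ((d : ℝ) + 1))⁻¹ := by positivity
    simpa using Complex.zero_le_real.2 h
  rw [← tpow_smul, ptN_tpow_sub_tpow, pt_wernerSym, pt_smul_wernerAsym hd]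
  exact (PosSemidef.kroneckerPow_add_add_and_sub (PosSemidef.one.smul hc)
    ((posSemidef_vecMulVec_self_star _).smul hc) n).2

end Werner

theorem sep_error_lower_bound_general (d : ℕ) (hd : 2 ≤ d) (n : ℕ) (p : ℝ)
    (hp0 : 0 ≤ p)
    (E : Matrix (Fin n → Fin d × Fin d) (Fin n → Fin d × Fin d) ℂ)
    (hE : IsSep (Matrix.reindex (Equiv.arrowProdEquivProdArrow (Fin n) (fun _ => Fin d) (fun _ => Fin d))
        (Equiv.arrowProdEquivProdArrow (Fin n) (fun _ => Fin d) (fun _ => Fin d)) E))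
    (hE1 : IsSep (Matrix.reindex (Equiv.arrowProdEquivProdArrow (Fin n) (fun _ => Fin d) (fun _ => Fin d))
        (Equiv.arrowProdEquivProdArrow (Fin n) (fun _ => Fin d) (fun _ => Fin d)) (1 - E))) :
    ((p : ℂ) * (E * tpow n (wernerSym d)).trace
        + (1 - (p : ℂ)) * ((1 - E) * tpow n (wernerAsym d)).trace).re
      ≥ min (p * (((d : ℝ) - 1) / ((d : ℝ) + 1)) ^ n) (1 - p) := by
  set r : ℝ := ((d : ℝ) - 1) / ((d : ℝ) + 1)
  set x := (E * tpow n (wernerAsym d)).trace.re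
  have hα : (tpow n (wernerAsym d)).PosSemidef := (posSemidef_wernerAsym d).kroneckerPow n
  have hgap : r ^ n * x ≤ (E * tpow n (wernerSym d)).trace.re := by
    have h := (posSemidef_ptN_of_isSep_reindex hE).trace_mul_nonneg
      (posSemidef_ptN_tpow_wernerSym_sub hd n)
    rw [trace_ptN_mul_ptN, Matrix.mul_sub, trace_sub, Matrix.mul_smul, trace_smul] at h
    simpa only [smul_eq_mul, Complex.sub_re, Complex.zero_re, ← Complex.ofReal_pow,
      Complex.re_ofReal_mul, sub_nonneg] using (Complex.le_def.1 h).1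
  have hx0 : 0 ≤ x := (Complex.le_def.1 ((posSemidef_of_isSep_reindex hE).trace_mul_nonneg hα)).1
  have hx1 : 0 ≤ 1 - x := by
    have h := (Complex.le_def.1 ((posSemidef_of_isSep_reindex hE1).trace_mul_nonneg hα)).1
    rwa [Matrix.sub_mul, Matrix.one_mul, trace_sub, trace_tpow_wernerAsym hd, Complex.sub_re,
      Complex.one_re] at h
  have herr : ((p : ℂ) * (E * tpow n (wernerSym d)).trace
      + (1 - (p : ℂ)) * ((1 - E) * tpow n (wernerAsym d)).trace).re =
      p * (E * tpow n (wernerSym d)).trace.re + (1 - p) * (1 - x) := by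
    rw [Matrix.sub_mul, Matrix.one_mul, trace_sub, trace_tpow_wernerAsym hd]
    simp [x]
  rw [herr, ge_iff_le]
  calc min (p * r ^ n) (1 - p) ≤ x * (p * r ^ n) + (1 - x) * (1 - p) :=
        min_le_mul_add_one_sub_mul hx0 (by linarith)
    _ ≤ p * (E * tpow n (wernerSym d)).trace.re + (1 - p) * (1 - x) := by
        nlinarith [mul_le_mul_of_nonneg_left hgap hp0]

/-- lower bound on the error probability of any separable POVM element. -/
theorem sep_error_lower_bound (d : ℕ) (hd : 2 ≤ d) (n : ℕ) (p : ℝ)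
    (hp0 : 0 ≤ p) (hp1 : p ≤ 1)
    (E : Matrix (Fin n → Fin d × Fin d) (Fin n → Fin d × Fin d) ℂ)
    (hE : IsSep (Matrix.reindex (Equiv.arrowProdEquivProdArrow (Fin n) (fun _ => Fin d) (fun _ => Fin d))
        (Equiv.arrowProdEquivProdArrow (Fin n) (fun _ => Fin d) (fun _ => Fin d)) E))
    (hE1 : IsSep (Matrix.reindex (Equiv.arrowProdEquivProdArrow (Fin n) (fun _ => Fin d) (fun _ => Fin d))
        (Equiv.arrowProdEquivProdArrow (Fin n) (fun _ => Fin d) (fun _ => Fin d)) (1 - E))) :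
    ((p : ℂ) * (E * tpow n (wernerSym d)).trace
        + (1 - (p : ℂ)) * ((1 - E) * tpow n (wernerAsym d)).trace).re
      ≥ min (p * (((d : ℝ) - 1) / ((d : ℝ) + 1)) ^ n) (1 - p) :=
  sep_error_lower_bound_general d hd n p hp0 E hE hE1
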